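/- Let f be an n-variable Boolean function. Then f is bent if and only if for every nonempty subset T ⊆ [n], inf_f(T) = 1 − 2^{−#T}. -/
import Mathlib


open Finset

namespace BF

/-- Hamming weight of a vector in `F_2^n`. -/
def wt {n : ℕ} (a : Fin n → ZMod 2) : ℕ := (univ.filter fun i => a i ≠ 0).card

/-- Normalised Walsh transform `W_f(a) = 2^{-n} Σ_x (-1)^{f(x) ⊕ ⟨x,a⟩}`. -/
noncomputable def walsh {n : ℕ} (f : (Fin n → ZMod 2) → ZMod 2) (a : Fin n → ZMod 2) : ℝ :=
  (1 / 2 ^ n) * ∑ x : Fin n → ZMod 2, (-1 : ℝ) ^ (f x + ∑ i, x i * a i).val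

/-- Normalised auto-correlation `C_f(a) = 2^{-n} Σ_x (-1)^{f(x) ⊕ f(x ⊕ a)}`. -/
noncomputable def autocorr {n : ℕ} (f : (Fin n → ZMod 2) → ZMod 2) (a : Fin n → ZMod 2) : ℝ :=
  (1 / 2 ^ n) * ∑ x : Fin n → ZMod 2, (-1 : ℝ) ^ (f x + f (x + a)).val

/-- Influence of the set of variables `T` on `f`:
`inf_f(T) = 1 - 2^{-#T} Σ_{a ≤ χ_T} C_f(a)`. -/
noncomputable def influence {n : ℕ} (f : (Fin n → ZMod 2) → ZMod 2) (T : Finset (Fin n)) : ℝ :=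
  1 - (1 / 2 ^ T.card) *
    ∑ a ∈ univ.filter (fun a : Fin n → ZMod 2 => ∀ i, a i ≠ 0 → i ∈ T), autocorr f a

/-- Total influence `t-inf(f) = (Σ_{#T = t} inf_f(T)) / C(n,t)`. -/
noncomputable def totalInf {n : ℕ} (f : (Fin n → ZMod 2) → ZMod 2) (t : ℕ) : ℝ :=
  (∑ T ∈ univ.filter (fun T : Finset (Fin n) => T.card = t), influence f T) / (n.choose t)

/-- `p̂_f(k) = Σ_{wt(u) = k} (W_f(u))²`. -/
noncomputable def pHat {n : ℕ} (f : (Fin n → ZMod 2) → ZMod 2) (k : ℕ) : ℝ :=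
  ∑ u ∈ univ.filter (fun u : Fin n → ZMod 2 => wt u = k), (walsh f u) ^ 2

/-- `f` is bent: `W_f(a) = ±2^{-n/2}` for every `a`. -/
def isBent {n : ℕ} (f : (Fin n → ZMod 2) → ZMod 2) : Prop :=
  ∀ a : Fin n → ZMod 2,
    walsh f a = (2 : ℝ) ^ (-(n : ℝ) / 2) ∨ walsh f a = -((2 : ℝ) ^ (-(n : ℝ) / 2))


abbrev V (n : ℕ) := Fin n → ZMod 2

noncomputable def chi (v : ZMod 2) : ℝ := (-1 : ℝ) ^ v.val

lemma z2 (v : ZMod 2) : v = 0 ∨ v = 1 := by revert v; decide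

lemma chi_zero : chi 0 = 1 := by norm_num [chi]

lemma chi_one : chi 1 = -1 := by norm_num [chi, show (1:ZMod 2).val = 1 from rfl]

lemma chi_add (u v : ZMod 2) : chi (u + v) = chi u * chi v := by
  rcases z2 u with hu | hu <;> rcases z2 v with hv | hv <;> subst hu <;> subst hv <;>
    simp [chi_zero, chi_one, show ((1:ZMod 2)+1) = 0 from rfl]

def ip {n : ℕ} (x y : V n) : ZMod 2 := ∑ i, x i * y i

lemma ip_comm {n : ℕ} (x y : V n) : ip x y = ip y x := by simp [ip, mul_comm]

lemma ip_add_left {n : ℕ} (x y z : V n) : ip (x + y) z = ip x z + ip y z := by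
  simp [ip, add_mul, Finset.sum_add_distrib]

lemma ip_add_right {n : ℕ} (x y z : V n) : ip x (y + z) = ip x y + ip x z := by
  simp [ip, mul_add, Finset.sum_add_distrib]

lemma ip_zero_left {n : ℕ} (y : V n) : ip 0 y = 0 := by simp [ip]

lemma negV {n : ℕ} (v : V n) : -v = v := by
  funext i
  rcases z2 (v i) with h | h <;> simp [h] <;> decide

lemma addV_self {n : ℕ} (v : V n) : v + v = 0 := by
  funext i
  rcases z2 (v i) with h | h <;> simp [h] <;> decide

lemma sum_chi {n : ℕ} (a : V n) :
    ∑ x : V n, chi (ip x a) = if a = 0 then ((2:ℝ) ^ n) else 0 := by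
  split_ifs with h
  · subst h
    simp [ip, chi_zero, Fintype.card_pi]
  · obtain ⟨i, hi⟩ : ∃ i, a i ≠ 0 := by
      by_contra hc
      push_neg at hc
      exact h (funext fun i => hc i)
    have hai : a i = 1 := by rcases z2 (a i) with h' | h' <;> simp_all
    set e : V n := Pi.single i 1 with he
    have hipe : ip e a = 1 := by
      rw [ip]
      rw [Finset.sum_eq_single i]
      · simp [he, hai]
      · intro j _ hj; simp [he, Pi.single_eq_of_ne hj]
      · simp
    have key : ∑ x : V n, chi (ip x a) = ∑ x : V n, chi (ip (x + e) a) :=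
      Fintype.sum_equiv (Equiv.addRight e) _ _ (fun x => by simp [add_assoc, addV_self])
    have key2 : ∑ x : V n, chi (ip (x + e) a) = -∑ x : V n, chi (ip x a) := by
      rw [← Finset.sum_neg_distrib]
      refine Finset.sum_congr rfl fun x _ => ?_
      rw [ip_add_left, chi_add, hipe, chi_one]
      ring
    have := key.trans key2
    linarith


variable {n : ℕ} (f : V n → ZMod 2)

lemma walsh_def (u : V n) : walsh f u = (1/2^n) * ∑ x : V n, chi (f x + ip x u) := rfl

lemma autocorr_def (a : V n) :
    autocorr f a = (1/2^n) * ∑ x : V n, chi (f x + f (x + a)) := rfl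

lemma four_pow : (4:ℝ)^n = 2^n * 2^n := by rw [← mul_pow]; norm_num

lemma walsh_sq (u : V n) :
    (walsh f u)^2 = (1/4^n) * ∑ x : V n, ∑ y : V n, chi (f x + f y) * chi (ip (x+y) u) := by
  rw [sq, walsh_def, mul_mul_mul_comm]
  have h4 : (1/(2:ℝ)^n) * (1/2^n) = 1/4^n := by
    rw [div_mul_div_comm, one_mul, ← mul_pow]; norm_num
  rw [h4]
  congr 1
  rw [Finset.sum_mul_sum]
  refine Finset.sum_congr rfl fun x _ => Finset.sum_congr rfl fun y _ => ?_
  rw [chi_add, chi_add, chi_add, ip_add_left, chi_add]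
  ring

lemma wk (a : V n) : autocorr f a = ∑ u : V n, (walsh f u)^2 * chi (ip u a) := by
  have step1 : ∀ u : V n, (walsh f u)^2 * chi (ip u a)
      = (1/4^n) * ∑ x : V n, ∑ y : V n, chi (f x + f y) * chi (ip u (x + y + a)) := by
    intro u
    rw [walsh_sq, mul_assoc, Finset.sum_mul]
    congr 1
    refine Finset.sum_congr rfl fun x _ => ?_
    rw [Finset.sum_mul]
    refine Finset.sum_congr rfl fun y _ => ?_
    rw [mul_assoc, ip_comm, ← chi_add, ← ip_add_right]
  have hsum : ∑ u : V n, (walsh f u)^2 * chi (ip u a)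
      = (1/4^n) * ∑ x : V n, ∑ y : V n, chi (f x + f y) * ∑ u : V n, chi (ip u (x+y+a)) := by
    simp_rw [step1]
    rw [← Finset.mul_sum]
    congr 1
    rw [Finset.sum_comm]
    refine Finset.sum_congr rfl fun x _ => ?_
    rw [Finset.sum_comm]
    refine Finset.sum_congr rfl fun y _ => ?_
    rw [Finset.mul_sum]
  have hip : ∀ x y : V n, ∑ u : V n, chi (ip u (x+y+a)) = if x+y+a = 0 then ((2:ℝ)^n) else 0 :=
    fun x y => sum_chi _
  have hinner : ∀ x : V n,
      ∑ y : V n, chi (f x + f y) * (if x+y+a = 0 then ((2:ℝ)^n) else 0)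
        = chi (f x + f (x + a)) * 2^n := by
    intro x
    have hcond : ∀ y : V n, (x + y + a = 0) ↔ (y = x + a) := by
      intro y
      constructor
      · intro h0
        have h2 : (x + y + a) + (x + a) = y := by
          rw [show (x+y+a)+(x+a) = y + (x+x) + (a+a) from by ring, addV_self, addV_self,
            add_zero, add_zero]
        rw [h0, zero_add] at h2
        exact h2.symm
      · intro hy
        subst hy
        rw [show x + (x+a) + a = (x+x) + (a+a) from by ring, addV_self, addV_self, add_zero]
    simp_rw [hcond, mul_ite, mul_zero]
    rw [Finset.sum_ite_eq' univ (x + a) (fun y => chi (f x + f y) * 2^n)]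
    simp
  rw [hsum]
  simp_rw [hip, hinner]
  rw [autocorr_def, ← Finset.sum_mul, four_pow]
  field_simp

lemma walsh_sq_inv (u : V n) :
    (walsh f u)^2 = (1/2^n) * ∑ a : V n, autocorr f a * chi (ip a u) := by
  have step : ∑ a : V n, autocorr f a * chi (ip a u)
      = ∑ v : V n, (walsh f v)^2 * ∑ a : V n, chi (ip a (v + u)) := by
    simp_rw [wk f, Finset.sum_mul]
    rw [Finset.sum_comm]
    refine Finset.sum_congr rfl fun v _ => ?_
    rw [Finset.mul_sum]
    refine Finset.sum_congr rfl fun a _ => ?_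
    rw [mul_assoc, ip_comm v a, ← chi_add, ← ip_add_right]
  have hcond : ∀ v : V n, (v + u = 0) ↔ (v = u) := by
    intro v
    constructor
    · intro h0
      have h2 : (v + u) + u = v := by
        rw [show (v+u)+u = v + (u+u) by ring, addV_self, add_zero]
      rw [h0, zero_add] at h2
      exact h2.symm
    · intro hv; rw [hv]; exact addV_self u
  rw [step]
  simp_rw [sum_chi, hcond, mul_ite, mul_zero]
  rw [Finset.sum_ite_eq' univ u (fun v => (walsh f v)^2 * 2^n)]
  simp only [Finset.mem_univ, if_true]
  field_simp

lemma autocorr_zero : autocorr f 0 = 1 := by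
  rw [autocorr_def]
  have : ∀ x : V n, chi (f x + f (x + 0)) = 1 := by
    intro x
    rw [add_zero, show f x + f x = 0 from by rcases z2 (f x) with h|h <;> rw [h] <;> decide,
      chi_zero]
  simp_rw [this]
  simp [Fintype.card_pi]

lemma csq : ((2:ℝ) ^ (-(n:ℝ)/2))^2 = 1/2^n := by
  rw [← Real.rpow_natCast ((2:ℝ) ^ (-(n:ℝ)/2)) 2, ← Real.rpow_mul (by norm_num)]
  rw [show -(n:ℝ)/2 * (2:ℕ) = -(n:ℝ) by push_cast; ring]
  rw [Real.rpow_neg (by norm_num), Real.rpow_natCast]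
  exact inv_eq_one_div _

lemma bent_iff_ac : isBent f ↔ ∀ a : V n, a ≠ 0 → autocorr f a = 0 := by
  constructor
  · intro hb a ha
    have hw2 : ∀ u : V n, (walsh f u)^2 = 1/2^n := by
      intro u
      rcases hb u with h | h <;> rw [h]
      · exact csq
      · rw [neg_sq]; exact csq
    rw [wk]
    have : ∑ u : V n, (walsh f u)^2 * chi (ip u a) = (1/2^n) * ∑ u : V n, chi (ip u a) := by
      rw [Finset.mul_sum]
      exact Finset.sum_congr rfl fun u _ => by rw [hw2]
    rw [this, sum_chi, if_neg ha, mul_zero]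
  · intro hac u
    have hw2 : (walsh f u)^2 = 1/2^n := by
      rw [walsh_sq_inv]
      rw [Finset.sum_eq_single 0]
      · rw [autocorr_zero, ip_zero_left, chi_zero]; ring
      · intro b _ hb; rw [hac b hb, zero_mul]
      · simp
    have hfac : (walsh f u - (2:ℝ)^(-(n:ℝ)/2)) * (walsh f u + (2:ℝ)^(-(n:ℝ)/2)) = 0 := by
      have h2 := csq (n := n)
      linear_combination hw2 - h2
    rcases mul_eq_zero.mp hfac with h | h
    · exact Or.inl (by linarith)
    · exact Or.inr (by linarith)

lemma eq_of_filter_eq {n : ℕ} (a b : V n)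
    (h : univ.filter (fun i => a i ≠ 0) = univ.filter (fun i => b i ≠ 0)) : a = b := by
  funext i
  have hi := Finset.ext_iff.mp h i
  simp only [Finset.mem_filter, Finset.mem_univ, true_and] at hi
  rcases z2 (a i) with h1 | h1 <;> rcases z2 (b i) with h2 | h2 <;> rw [h1, h2] <;>
    simp [h1, h2] at hi ⊢

/-- `f` is bent iff `inf_f(T) = 1 - 2^{-#T}` for every nonempty `T`. -/
theorem bent_iff_influence {n : ℕ} (f : (Fin n → ZMod 2) → ZMod 2) :
    isBent f ↔
      ∀ T : Finset (Fin n), T.Nonempty → influence f T = 1 - 1 / 2 ^ T.card := by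
  rw [bent_iff_ac]
  constructor
  · intro hz T _
    rw [influence]
    have h0mem : (0 : V n) ∈ univ.filter (fun a : V n => ∀ i, a i ≠ 0 → i ∈ T) := by simp
    rw [← Finset.add_sum_erase _ _ h0mem, autocorr_zero,
      Finset.sum_eq_zero (fun b hb => hz b (Finset.ne_of_mem_erase hb))]
    ring
  · intro h
    have key : ∀ k, ∀ a : V n, wt a = k → a ≠ 0 → autocorr f a = 0 := by
      intro k
      induction k using Nat.strong_induction_on with
      | _ k IH =>
        intro a hk ha
        set T : Finset (Fin n) := univ.filter (fun i => a i ≠ 0) with hT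
        have hTne : T.Nonempty := by
          obtain ⟨i, hi⟩ := Function.ne_iff.mp ha
          refine ⟨i, ?_⟩
          rw [hT, Finset.mem_filter]
          exact ⟨Finset.mem_univ i, by simpa using hi⟩
        have hinf := h T hTne
        rw [influence] at hinf
        set S := univ.filter (fun b : V n => ∀ i, b i ≠ 0 → i ∈ T) with hS
        have hsum1 : ∑ b ∈ S, autocorr f b = 1 := by
          have hne : (1/(2:ℝ)^T.card) ≠ 0 := by positivity
          have h2 : (1/(2:ℝ)^T.card) * ∑ b ∈ S, autocorr f b = (1/(2:ℝ)^T.card) * 1 := by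
            rw [mul_one]; linarith
          exact mul_left_cancel₀ hne h2
        have h0mem : (0 : V n) ∈ S := by simp [hS]
        have haMem : a ∈ S.erase 0 := by
          refine Finset.mem_erase.mpr ⟨ha, ?_⟩
          rw [hS, Finset.mem_filter]
          refine ⟨Finset.mem_univ a, fun i hi => ?_⟩
          rw [hT, Finset.mem_filter]
          exact ⟨Finset.mem_univ i, hi⟩
        have hsum0 : ∑ b ∈ S.erase 0, autocorr f b = 0 := by
          have h3 := Finset.add_sum_erase S (autocorr f) h0mem
          rw [autocorr_zero] at h3
          linarith
        have hrest : ∑ b ∈ (S.erase 0).erase a, autocorr f b = 0 := by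
          refine Finset.sum_eq_zero fun b hb => ?_
          have hba : b ≠ a := (Finset.mem_erase.mp hb).1
          have hb0 : b ≠ 0 := (Finset.mem_erase.mp (Finset.mem_erase.mp hb).2).1
          have hbS : b ∈ S := (Finset.mem_erase.mp (Finset.mem_erase.mp hb).2).2
          have hbS' := (Finset.mem_filter.mp (hS ▸ hbS)).2
          have hsub : univ.filter (fun i => b i ≠ 0) ⊆ T := by
            intro i hi
            exact hbS' i (Finset.mem_filter.mp hi).2
          have hne_supp : univ.filter (fun i => b i ≠ 0) ≠ T := by
            intro heq
            exact hba (eq_of_filter_eq b a (by rw [heq, hT]))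
          have hlt : wt b < k := by
            have : wt a = T.card := by rw [wt, hT]
            calc wt b < T.card := Finset.card_lt_card (hsub.ssubset_of_ne hne_supp)
              _ = k := by rw [← this, hk]
          exact IH (wt b) hlt b rfl hb0
        have h4 := Finset.add_sum_erase (S.erase 0) (autocorr f) haMem
        rw [hrest] at h4
        linarith
    intro a ha
    exact key (wt a) a rfl ha

end BF
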